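/- Let d ≥ 1 and let F : ℝ^d → ℂ be a bounded, twice continuously differentiable function whose first and second partial derivatives are all bounded. Let ΔF = Σ_{j=1}^d ∂²F/∂x_j² and L = sup_{x ∈ ℝ^d} |ΔF(x)|. Then for every a ∈ ℝ^d and every t > 0, | ∫_{ℝ^d} F(a + y) dγ_t^d(y) − F(a) | ≤ t · L. -/

import Mathlib

open MeasureTheory ProbabilityTheory

/-- The Gaussian product measure on `ℝ^d` with mean `0` and variance `t` in each coordinate. -/
noncomputable def gaussRn (d : ℕ) (t : ℝ) : Measure (Fin d → ℝ) :=
  Measure.pi fun _ => gaussianReal 0 t.toNNReal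

/-!
Put `φ(s) = ∫ F(a + s y) dγ_t(y)`, so that the claim bounds `φ 1 - φ 0`. Differentiating under
the integral, `φ'(s) = ∫ DF(a + s y) y dγ_t(y) = ∑ⱼ ∫ yⱼ ∂ⱼF(a + s y) dγ_t(y)`. Gaussian
integration by parts, `∫ yⱼ g(y) dγ_t(y) = t ∫ ∂ⱼg(y) dγ_t(y)` (Stein's identity: on `ℝ` it is
integration by parts against the density, whose derivative is `-(x/t)` times itself; on `ℝ^d` it
follows by Fubini along the `j`-th coordinate), turns this into
`φ'(s) = t s ∫ ΔF(a + s y) dγ_t(y)`. So `‖φ'‖ ≤ t L` on `[0, 1]`, and the mean value inequality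
concludes.
-/

open Filter Set
open scoped NNReal

variable {E : Type*} [NormedAddCommGroup E] [NormedSpace ℝ E]

theorem ContinuousLinearMap.apply_eq_sum_single {ι : Type*} [Fintype ι] [DecidableEq ι]
    (f : (ι → ℝ) →L[ℝ] E) (y : ι → ℝ) : f y = ∑ j, y j • f (Pi.single j 1) := by
  conv_lhs => rw [← Finset.univ_sum_single y, map_sum]
  refine Finset.sum_congr rfl fun j _ ↦ ?_
  rw [← map_smul, ← Pi.single_smul, smul_eq_mul, mul_one]

theorem fderiv_clm_apply_const_apply {V W : Type*} [NormedAddCommGroup V] [NormedSpace ℝ V]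
    [NormedAddCommGroup W] [NormedSpace ℝ W] {c : V → W →L[ℝ] E} {z : V}
    (hc : DifferentiableAt ℝ c z) (v : W) (w : V) :
    fderiv ℝ (fun x ↦ c x v) z w = fderiv ℝ c z w v := by
  simp [fderiv_clm_apply hc (differentiableAt_const v)]

theorem fderiv_comp_const_add_smul_apply {V : Type*} [NormedAddCommGroup V] [NormedSpace ℝ V]
    (G : V → E) (a : V) (s : ℝ) (y v : V) :
    fderiv ℝ (fun y ↦ G (a + s • y)) y v = s • fderiv ℝ G (a + s • y) v := by
  have h := fderiv_comp_smul (f := fun z ↦ G (a + z)) (x := y) s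
  simp only [fderiv_comp_add_left] at h
  rw [h]
  rfl

theorem hasDerivAt_finInsertNth {n : ℕ} (j : Fin (n + 1)) (w : Fin n → ℝ) (x : ℝ) :
    HasDerivAt (fun x ↦ (j.insertNth x w : Fin (n + 1) → ℝ)) (Pi.single j 1) x := by
  have hupdate : (fun x ↦ (j.insertNth x w : Fin (n + 1) → ℝ)) =
      Function.update (j.insertNth (0 : ℝ) w : Fin (n + 1) → ℝ) j :=
    funext fun x ↦ by rw [Fin.update_insertNth]
  rw [hupdate]
  exact hasDerivAt_update _ j x

theorem MeasureTheory.integral_pi_eq_integral_integral_insertNth {n : ℕ}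
    {α : Fin (n + 1) → Type*} [∀ i, MeasurableSpace (α i)] (μ : ∀ i, Measure (α i))
    [∀ i, SigmaFinite (μ i)] (j : Fin (n + 1)) {f : (∀ i, α i) → E}
    (hf : Integrable f (Measure.pi μ)) :
    ∫ y, f y ∂Measure.pi μ =
      ∫ w, ∫ x, f (j.insertNth x w) ∂μ j ∂Measure.pi fun i ↦ μ (j.succAbove i) := by
  have he := (measurePreserving_piFinSuccAbove μ j).symm
  rw [← he.integral_comp' f]
  exact integral_prod_symm _ ((he.integrable_comp_emb (MeasurableEquiv.measurableEmbedding _)).2 hf)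

theorem hasDerivAt_integral_comp_add_smul {V G : Type*} [NormedAddCommGroup V] [NormedSpace ℝ V]
    [MeasurableSpace V] [OpensMeasurableSpace V] [SecondCountableTopology V]
    [NormedAddCommGroup G] [NormedSpace ℝ G] (μ : Measure V) [IsFiniteMeasure μ]
    (hμ : Integrable id μ) {F : V → G} (hF : ContDiff ℝ 1 F) {C : ℝ}
    (hC : ∀ x, ‖fderiv ℝ F x‖ ≤ C) (a : V) (s₀ : ℝ) :
    HasDerivAt (fun s ↦ ∫ y, F (a + s • y) ∂μ) (∫ y, fderiv ℝ F (a + s₀ • y) y ∂μ) s₀ := by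
  have hFd := hF.differentiable one_ne_zero
  have hF_int : Integrable (fun y ↦ F (a + s₀ • y)) μ := by
    refine ((integrable_const ‖F a‖).add (hμ.norm.const_mul (C * |s₀|))).mono'
      (by fun_prop) (ae_of_all _ fun y ↦ ?_)
    have hlip := (convex_univ (𝕜 := ℝ) (E := V)).norm_image_sub_le_of_norm_fderiv_le
      (fun x _ ↦ hFd x) (fun x _ ↦ hC x) (mem_univ a) (mem_univ (a + s₀ • y))
    rw [add_sub_cancel_left, norm_smul, Real.norm_eq_abs] at hlip
    calc ‖F (a + s₀ • y)‖ ≤ ‖F a‖ + ‖F (a + s₀ • y) - F a‖ := norm_le_insert' _ _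
      _ ≤ ‖F a‖ + C * |s₀| * ‖id y‖ := by rw [mul_assoc]; exact add_le_add_right hlip _
  refine (hasDerivAt_integral_of_dominated_loc_of_deriv_le (bound := fun y ↦ C * ‖y‖)
    (F := fun s y ↦ F (a + s • y)) (F' := fun s y ↦ fderiv ℝ F (a + s • y) y) univ_mem
    (Eventually.of_forall fun s ↦ (hF.continuous.comp (by fun_prop)).aestronglyMeasurable) hF_int ?_
    (ae_of_all _ fun y s _ ↦ ?_) (hμ.norm.const_mul C) (ae_of_all _ fun y s _ ↦ ?_)).2
  · exact (((hF.continuous_fderiv one_ne_zero).comp (by fun_prop)).clm_apply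
      continuous_id).aestronglyMeasurable
  · exact ((fderiv ℝ F _).le_opNorm y).trans (by gcongr; exact hC _)
  · simpa [Function.comp_def] using
      (hFd _).hasFDerivAt.comp_hasDerivAt s (((hasDerivAt_id s).smul_const y).const_add a)

namespace ProbabilityTheory

theorem hasDerivAt_gaussianPDFReal (μ : ℝ) (v : ℝ≥0) (x : ℝ) :
    HasDerivAt (gaussianPDFReal μ v) (-((x - μ) / v) * gaussianPDFReal μ v x) x := by
  have hexponent : HasDerivAt (fun x ↦ -(x - μ) ^ 2 / (2 * v)) (-(2 * (x - μ)) / (2 * v)) x := by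
    simpa using (((hasDerivAt_id x).sub_const μ).pow 2).neg.div_const (2 * (v : ℝ))
  rw [gaussianPDFReal_def]
  refine (hexponent.exp.const_mul (√(2 * Real.pi * v))⁻¹).congr_deriv ?_
  ring

theorem integrable_gaussianPDFReal_smul_iff {μ : ℝ} {v : ℝ≥0} (hv : v ≠ 0) {f : ℝ → E} :
    Integrable (fun x ↦ gaussianPDFReal μ v x • f x) ↔ Integrable f (gaussianReal μ v) := by
  rw [gaussianReal_of_var_ne_zero μ hv, integrable_withDensity_iff_integrable_smul'
    (measurable_gaussianPDF μ v) (ae_of_all _ fun _ ↦ gaussianPDF_lt_top)]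
  simp only [toReal_gaussianPDF]

theorem integrable_sub_smul_gaussianReal {μ : ℝ} {v : ℝ≥0} {g : ℝ → E} (hg : Continuous g)
    {C : ℝ} (hC : ∀ x, ‖g x‖ ≤ C) :
    Integrable (fun x ↦ (x - μ) • g x) (gaussianReal μ v) := by
  have hid : Integrable (fun x ↦ x - μ) (gaussianReal μ v) :=
    ((memLp_id_gaussianReal 1).integrable le_rfl).sub (integrable_const μ)
  refine (hid.norm.mul_const C).mono' (by fun_prop) (ae_of_all _ fun x ↦ ?_)
  rw [norm_smul]
  exact mul_le_mul_of_nonneg_left (hC x) (norm_nonneg _)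

theorem integral_sub_smul_gaussianReal [CompleteSpace E] {μ : ℝ} {v : ℝ≥0} {g : ℝ → E}
    (hg : Differentiable ℝ g) {C : ℝ} (hC : ∀ x, ‖g x‖ ≤ C)
    (hg' : Integrable (deriv g) (gaussianReal μ v)) :
    ∫ x, (x - μ) • g x ∂gaussianReal μ v = (v : ℝ) • ∫ x, deriv g x ∂gaussianReal μ v := by
  rcases eq_or_ne v 0 with rfl | hv
  · simp [integral_dirac]
  have hgμ : Integrable g (gaussianReal μ v) :=
    .of_bound hg.continuous.aestronglyMeasurable C (ae_of_all _ hC)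
  have hpdf_deriv_smul : ∀ x, (-((x - μ) / v) * gaussianPDFReal μ v x) • g x
      = -(v : ℝ)⁻¹ • (gaussianPDFReal μ v x • (x - μ) • g x) := fun x ↦ by
    rw [smul_smul, smul_smul, div_eq_inv_mul]
    ring_nf
  have ibp := integral_bilinear_hasDerivAt_right_eq_neg_left_of_integrable
    (L := ContinuousLinearMap.lsmul ℝ ℝ) (u := gaussianPDFReal μ v) (v := g)
    (fun x _ ↦ hasDerivAt_gaussianPDFReal μ v x) (fun x _ ↦ (hg x).hasDerivAt)
    ((integrable_gaussianPDFReal_smul_iff hv).2 hg')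
    ((((integrable_gaussianPDFReal_smul_iff hv).2
      (integrable_sub_smul_gaussianReal hg.continuous hC)).smul (-(v : ℝ)⁻¹)).congr
      (ae_of_all _ fun x ↦ (hpdf_deriv_smul x).symm))
    ((integrable_gaussianPDFReal_smul_iff hv).2 hgμ)
  simp only [ContinuousLinearMap.lsmul_apply, hpdf_deriv_smul, integral_smul] at ibp
  rw [integral_gaussianReal_eq_integral_smul hv, integral_gaussianReal_eq_integral_smul hv, ibp,
    neg_smul, neg_neg, smul_smul, mul_inv_cancel₀ (by exact_mod_cast hv), one_smul]

end ProbabilityTheory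

instance instIsProbabilityMeasureGaussRn (d : ℕ) (t : ℝ) : IsProbabilityMeasure (gaussRn d t) := by
  unfold gaussRn
  infer_instance

theorem integrable_id_gaussRn (d : ℕ) (t : ℝ) : Integrable id (gaussRn d t) :=
  memLp_one_iff_integrable.1 <| MemLp.of_eval fun j ↦
    (memLp_id_gaussianReal 1).comp_measurePreserving (measurePreserving_eval _ j)

theorem integrable_apply_smul_gaussRn {d : ℕ} (t : ℝ) (j : Fin d) {g : (Fin d → ℝ) → E}
    (hg : Continuous g) {A : ℝ} (hA : ∀ y, ‖g y‖ ≤ A) :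
    Integrable (fun y ↦ y j • g y) (gaussRn d t) := by
  refine (((integrable_id_gaussRn d t).eval j).norm.mul_const A).mono'
    ((continuous_apply j).smul hg).aestronglyMeasurable (ae_of_all _ fun y ↦ ?_)
  rw [norm_smul]
  exact mul_le_mul_of_nonneg_left (hA y) (norm_nonneg _)

theorem integral_apply_smul_gaussRn [CompleteSpace E] {d : ℕ} {t : ℝ} (ht : 0 ≤ t) (j : Fin d)
    {g : (Fin d → ℝ) → E} (hg : ContDiff ℝ 1 g) {A B : ℝ} (hA : ∀ y, ‖g y‖ ≤ A)
    (hB : ∀ y, ‖fderiv ℝ g y (Pi.single j 1)‖ ≤ B) :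
    ∫ y, y j • g y ∂gaussRn d t = t • ∫ y, fderiv ℝ g y (Pi.single j 1) ∂gaussRn d t := by
  cases d with
  | zero => exact j.elim0
  | succ n =>
  have hderiv : ∀ w x, HasDerivAt (fun x ↦ g (j.insertNth x w))
      (fderiv ℝ g (j.insertNth x w) (Pi.single j 1)) x := fun w x ↦
    ((hg.differentiable one_ne_zero) _).hasFDerivAt.comp_hasDerivAt x
      (hasDerivAt_finInsertNth j w x)
  have hint_left := integrable_apply_smul_gaussRn t j hg.continuous hA
  have hint_right : Integrable (fun y ↦ fderiv ℝ g y (Pi.single j 1)) (gaussRn (n + 1) t) :=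
    .of_bound ((hg.continuous_fderiv one_ne_zero).clm_apply continuous_const).aestronglyMeasurable
      B (ae_of_all _ hB)
  rw [gaussRn] at hint_left hint_right ⊢
  rw [integral_pi_eq_integral_integral_insertNth _ j hint_left,
    integral_pi_eq_integral_integral_insertNth _ j hint_right, ← integral_smul]
  refine integral_congr_ae (ae_of_all _ fun w ↦ ?_)
  have hstein := integral_sub_smul_gaussianReal (μ := 0) (v := t.toNNReal)
    (fun x ↦ (hderiv w x).differentiableAt) (fun x ↦ hA _)
    (.of_bound (aestronglyMeasurable_deriv _ _) B
      (ae_of_all _ fun x ↦ (hderiv w x).deriv ▸ hB _))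
  simpa only [sub_zero, Real.coe_toNNReal t ht, Fin.insertNth_apply_same,
    fun x ↦ (hderiv w x).deriv] using hstein

theorem integral_apply_smul_comp_const_add_smul_gaussRn [CompleteSpace E] {d : ℕ} {t : ℝ}
    (ht : 0 ≤ t) (j : Fin d) {G : (Fin d → ℝ) → E} (hG : ContDiff ℝ 1 G) {A B : ℝ}
    (hA : ∀ x, ‖G x‖ ≤ A) (hB : ∀ x, ‖fderiv ℝ G x (Pi.single j 1)‖ ≤ B) (a : Fin d → ℝ) (s : ℝ) :
    ∫ y, y j • G (a + s • y) ∂gaussRn d t =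
      (t * s) • ∫ y, fderiv ℝ G (a + s • y) (Pi.single j 1) ∂gaussRn d t := by
  rw [integral_apply_smul_gaussRn ht j (g := fun y ↦ G (a + s • y)) (hG.comp (by fun_prop))
    (fun y ↦ hA _) (B := |s| * B) fun y ↦ ?_]
  · simp_rw [fderiv_comp_const_add_smul_apply, integral_smul, smul_smul]
  · rw [fderiv_comp_const_add_smul_apply, norm_smul, Real.norm_eq_abs]
    exact mul_le_mul_of_nonneg_left (hB _) (abs_nonneg s)

-- `Fin d → ℝ` carries the sup norm, so Mathlib's `InnerProductSpace.laplacian` does not apply.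
noncomputable def coordLaplacian {ι : Type*} [Fintype ι] [DecidableEq ι] (F : (ι → ℝ) → E)
    (x : ι → ℝ) : E :=
  ∑ j, fderiv ℝ (fun y ↦ fderiv ℝ F y (Pi.single j 1)) x (Pi.single j 1)

theorem integral_fderiv_comp_add_smul_apply_gaussRn [CompleteSpace E] {d : ℕ} {t : ℝ}
    (ht : 0 ≤ t) {F : (Fin d → ℝ) → E} (hF : ContDiff ℝ 2 F) {C₁ C₂ : ℝ}
    (hC₁ : ∀ x, ‖fderiv ℝ F x‖ ≤ C₁) (hC₂ : ∀ x, ‖fderiv ℝ (fderiv ℝ F) x‖ ≤ C₂)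
    (a : Fin d → ℝ) (s : ℝ) :
    ∫ y, fderiv ℝ F (a + s • y) y ∂gaussRn d t =
      (t * s) • ∫ y, coordLaplacian F (a + s • y) ∂gaussRn d t := by
  set G : Fin d → (Fin d → ℝ) → E := fun j x ↦ fderiv ℝ F x (Pi.single j 1)
  have hsingle : ∀ j : Fin d, ‖(Pi.single j 1 : Fin d → ℝ)‖ = 1 := fun j ↦ by simp [Pi.norm_single]
  have hDF : ContDiff ℝ 1 (fderiv ℝ F) := hF.fderiv_right (by norm_num)
  have hG : ∀ j, ContDiff ℝ 1 (G j) := fun j ↦ hDF.clm_apply contDiff_const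
  have hG_bound : ∀ j x, ‖G j x‖ ≤ C₁ := fun j x ↦ by
    simpa using (fderiv ℝ F x).le_of_opNorm_le_of_le (hC₁ x) (hsingle j).le
  have hGG_bound : ∀ j x, ‖fderiv ℝ (G j) x (Pi.single j 1)‖ ≤ C₂ := fun j x ↦ by
    rw [fderiv_clm_apply_const_apply (hDF.differentiable one_ne_zero x)]
    simpa using (fderiv ℝ (fderiv ℝ F) x).le_of_opNorm₂_le_of_le (hC₂ x) (hsingle j).le
      (hsingle j).le
  have hint_left : ∀ j, Integrable (fun y ↦ y j • G j (a + s • y)) (gaussRn d t) := fun j ↦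
    integrable_apply_smul_gaussRn t j ((hG j).continuous.comp (by fun_prop)) fun y ↦ hG_bound j _
  have hint_right : ∀ j, Integrable (fun y ↦ fderiv ℝ (G j) (a + s • y) (Pi.single j 1))
      (gaussRn d t) := fun j ↦
    .of_bound ((((hG j).continuous_fderiv one_ne_zero).comp (by fun_prop)).clm_apply
      continuous_const).aestronglyMeasurable C₂ (ae_of_all _ fun y ↦ hGG_bound j _)
  calc ∫ y, fderiv ℝ F (a + s • y) y ∂gaussRn d t
      = ∫ y, ∑ j, y j • G j (a + s • y) ∂gaussRn d t :=
        integral_congr_ae (ae_of_all _ fun y ↦ ContinuousLinearMap.apply_eq_sum_single _ y)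
    _ = ∑ j, ∫ y, y j • G j (a + s • y) ∂gaussRn d t :=
        integral_finsetSum _ fun j _ ↦ hint_left j
    _ = ∑ j, (t * s) • ∫ y, fderiv ℝ (G j) (a + s • y) (Pi.single j 1) ∂gaussRn d t :=
        Finset.sum_congr rfl fun j _ ↦
          integral_apply_smul_comp_const_add_smul_gaussRn ht j (hG j) (hG_bound j) (hGG_bound j) a s
    _ = (t * s) • ∫ y, coordLaplacian F (a + s • y) ∂gaussRn d t := by
        rw [← Finset.smul_sum, ← integral_finsetSum _ fun j _ ↦ hint_right j]
        rfl

theorem gaussian_smoothing_laplacian_bound_general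
    (d : ℕ) (F : (Fin d → ℝ) → ℂ) (hF : ContDiff ℝ 2 F)
    (C₁ C₂ : ℝ)
    (hb1 : ∀ x, ‖fderiv ℝ F x‖ ≤ C₁)
    (hb2 : ∀ x, ‖fderiv ℝ (fderiv ℝ F) x‖ ≤ C₂)
    (L : ℝ)
    (hL : ∀ x, ‖∑ j, fderiv ℝ (fun y => fderiv ℝ F y (Pi.single j 1)) x (Pi.single j 1)‖ ≤ L)
    (a : Fin d → ℝ) (t : ℝ) (ht : 0 < t) :
    ‖(∫ y, F (a + y) ∂(gaussRn d t)) - F a‖ ≤ t * L := by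
  have hφ : ∀ s, HasDerivAt (fun s ↦ ∫ y, F (a + s • y) ∂gaussRn d t)
      ((t * s) • ∫ y, coordLaplacian F (a + s • y) ∂gaussRn d t) s := fun s ↦ by
    rw [← integral_fderiv_comp_add_smul_apply_gaussRn ht.le hF hb1 hb2]
    exact hasDerivAt_integral_comp_add_smul _ (integrable_id_gaussRn d t)
      (hF.of_le (by norm_num)) hb1 a s
  have hφ'_le : ∀ s ∈ Ico (0 : ℝ) 1,
      ‖(t * s) • ∫ y, coordLaplacian F (a + s • y) ∂gaussRn d t‖ ≤ t * L := fun s hs ↦ by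
    rw [norm_smul, Real.norm_of_nonneg (mul_nonneg ht.le hs.1)]
    calc t * s * ‖∫ y, coordLaplacian F (a + s • y) ∂gaussRn d t‖ ≤ t * 1 * L := by
          gcongr
          · exact hs.2.le
          · simpa [coordLaplacian] using norm_integral_le_of_norm_le_const (μ := gaussRn d t)
              (ae_of_all _ fun y ↦ hL (a + s • y))
      _ = t * L := by ring
  simpa using norm_image_sub_le_of_norm_deriv_le_segment_01'
    (fun s _ ↦ (hφ s).hasDerivWithinAt) hφ'_le

/-- If `F : ℝ^d → ℂ` is bounded and `C²` with bounded first and second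
derivatives, and `L` bounds the Laplacian `ΔF = Σ_j ∂²F/∂x_j²`, then the Gaussian smoothing
of variance `t` satisfies `| ∫ F(a+y) dγ_t^d(y) − F(a) | ≤ t·L`. -/
theorem gaussian_smoothing_laplacian_bound
    (d : ℕ) (hd : 1 ≤ d) (F : (Fin d → ℝ) → ℂ) (hF : ContDiff ℝ 2 F)
    (C₀ C₁ C₂ : ℝ)
    (hb0 : ∀ x, ‖F x‖ ≤ C₀)
    (hb1 : ∀ x, ‖fderiv ℝ F x‖ ≤ C₁)
    (hb2 : ∀ x, ‖fderiv ℝ (fderiv ℝ F) x‖ ≤ C₂)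
    (L : ℝ)
    (hL : ∀ x, ‖∑ j, fderiv ℝ (fun y => fderiv ℝ F y (Pi.single j 1)) x (Pi.single j 1)‖ ≤ L)
    (a : Fin d → ℝ) (t : ℝ) (ht : 0 < t) :
    ‖(∫ y, F (a + y) ∂(gaussRn d t)) - F a‖ ≤ t * L :=
  gaussian_smoothing_laplacian_bound_general d F hF C₁ C₂ hb1 hb2 L hL a t ht
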